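/- arXiv:2011.13030 — 2 statements merged into one kernel-verified Lean document; each statement's English description precedes it below -/
import Mathlib

section
/- Let U and H be separable Hilbert spaces, (S(t))_{t≥0} a C₀-semigroup of bounded linear operators on H, p ∈ [1,∞), (Ω,𝔉,ℙ) a probability space, and σ : Ω → L(U,H) a strongly measurable random bounded operator such that σ(ω) is a compact operator for almost every ω and E[‖σ‖_op^p] < ∞. Let (Δ_n)_{n∈ℕ} be a sequence of positive reals decreasing to 0. Then the random variables sup_{x∈[0,Δ_n]} ‖(I − S(x))∘σ‖_op converge to 0 almost surely and in L^p, i.e. E[sup_{x∈[0,Δ_n]} ‖(I − S(x))∘σ‖_op^p] → 0 as n → ∞. -/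
/-!
On a compact operator `T`, strong convergence `S x → 1` as `x → 0⁺` becomes convergence in
operator norm: `S x` is uniformly bounded near `0` (Banach–Steinhaus), and strong convergence of a
bounded family is uniform on the totally bounded set `T (closedBall 0 1)`. This gives the almost
sure statement. The supremum over `[0, Δ n]` is a Lipschitz function of `σ ω`, hence measurable,
and it is dominated by `(1 + C) ‖σ ω‖`, where `C` bounds `‖S x‖` on an interval containing every
`[0, Δ n]`; dominated convergence then gives the `L^p` statement.
-/

open MeasureTheory Filter
open scoped Topology NNReal

theorem LipschitzWith.iSup_real {α ι : Type*} [PseudoMetricSpace α] {f : ι → α → ℝ} {K : ℝ≥0}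
    (hf : ∀ i, LipschitzWith K (f i)) (hbdd : ∀ x, BddAbove (Set.range fun i => f i x)) :
    LipschitzWith K fun x => ⨆ i, f i x := by
  refine LipschitzWith.of_le_add_mul K fun x y => ?_
  rcases isEmpty_or_nonempty ι with _ | _
  · simp only [Real.iSup_of_isEmpty, zero_add]
    positivity
  · exact ciSup_le fun i => ((hf i).le_add_mul x y).trans
      (by gcongr; exact le_ciSup (hbdd y) i)

theorem tendsto_iSup_Icc_of_tendsto_nhdsGE {ι : Type*} {l : Filter ι} {f : ℝ → ℝ}
    (hf_nonneg : ∀ x, 0 ≤ f x) (hf : Tendsto f (𝓝[≥] 0) (𝓝 0)) {Δ : ι → ℝ}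
    (hΔ : Tendsto Δ l (𝓝 0)) :
    Tendsto (fun n => ⨆ x : Set.Icc (0 : ℝ) (Δ n), f x) l (𝓝 0) := by
  refine tendsto_order.2 ⟨fun a ha => Eventually.of_forall fun n =>
    ha.trans_le (Real.iSup_nonneg fun x => hf_nonneg x), fun a ha => ?_⟩
  obtain ⟨b, hb, hba⟩ := exists_between ha
  obtain ⟨δ, hδ, hfδ⟩ := mem_nhdsGE_iff_exists_Icc_subset.mp (hf.eventually (gt_mem_nhds hb))
  filter_upwards [hΔ.eventually (gt_mem_nhds hδ)] with n hn
  exact (Real.iSup_le (fun x => (hfδ ⟨x.2.1, x.2.2.trans hn.le⟩).le) hb.le).trans_lt hba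

theorem tendsto_integral_rpow_of_dominated {Ω : Type*} [MeasurableSpace Ω] {μ : Measure Ω}
    {p : ℝ} (hp : 0 < p) {f : ℕ → Ω → ℝ} {g : Ω → ℝ}
    (hf_meas : ∀ n, AEStronglyMeasurable (f n) μ) (hf_nonneg : ∀ n ω, 0 ≤ f n ω)
    (hfg : ∀ n ω, f n ω ≤ g ω) (hg : Integrable (fun ω => g ω ^ p) μ)
    (hlim : ∀ᵐ ω ∂μ, Tendsto (fun n => f n ω) atTop (𝓝 0)) :
    Tendsto (fun n => ∫ ω, f n ω ^ p ∂μ) atTop (𝓝 0) := by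
  have hpow := Real.continuous_rpow_const hp.le
  rw [← integral_zero Ω ℝ (μ := μ)]
  exact tendsto_integral_of_dominated_convergence (fun ω => g ω ^ p)
    (fun n => hpow.comp_aestronglyMeasurable (hf_meas n)) hg
    (fun n => Eventually.of_forall fun ω => by
      rw [Real.norm_of_nonneg (Real.rpow_nonneg (hf_nonneg n ω) p)]
      exact Real.rpow_le_rpow (hf_nonneg n ω) (hfg n ω) hp.le)
    (hlim.mono fun ω hω => by simpa [Real.zero_rpow hp.ne'] using hω.rpow_const (Or.inr hp.le))

section Operators

variable {E F G : Type*}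
  [NormedAddCommGroup E] [NormedSpace ℝ E]
  [NormedAddCommGroup F] [NormedSpace ℝ F]
  [NormedAddCommGroup G] [NormedSpace ℝ G]

theorem IsCompact.exists_norm_le_of_continuousOn_apply [CompleteSpace F]
    {X : Type*} [TopologicalSpace X] {K : Set X} (hK : IsCompact K) {A : X → F →L[ℝ] G}
    (hA : ∀ y, ContinuousOn (fun x => A x y) K) : ∃ C : ℝ≥0, ∀ x ∈ K, ‖A x‖ ≤ C := by
  obtain ⟨C, hC⟩ := banach_steinhaus (g := fun x : K => A x) fun y => by
    obtain ⟨C, hC⟩ := hK.exists_bound_of_continuousOn (hA y)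
    exact ⟨C, fun x => hC x x.2⟩
  exact ⟨C.toNNReal, fun x hx => (hC ⟨x, hx⟩).trans (Real.le_coe_toNNReal C)⟩

theorem TotallyBounded.tendstoUniformlyOn_of_tendsto_apply {ι : Type*} {l : Filter ι}
    {A : ι → F →L[ℝ] G} {B : F →L[ℝ] G} {C : ℝ} (hA_bdd : ∀ᶠ i in l, ‖A i‖ ≤ C)
    (hA : ∀ y, Tendsto (fun i => A i y) l (𝓝 (B y))) {K : Set F} (hK : TotallyBounded K) :
    TendstoUniformlyOn (fun i y => A i y) B l K := by
  rw [Metric.tendstoUniformlyOn_iff]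
  intro ε hε
  obtain ⟨r, hr, hrε⟩ := exists_pos_mul_lt (half_pos hε) (‖B‖ + |C|)
  obtain ⟨t, ht, hKt⟩ := Metric.totallyBounded_iff.mp hK r hr
  have hA_net : ∀ᶠ i in l, ∀ z ∈ t, dist (B z) (A i z) < ε / 2 :=
    (eventually_all_finite ht).mpr fun z _ =>
      ((hA z).eventually (Metric.ball_mem_nhds _ (half_pos hε))).mono fun _ h => by
        rwa [dist_comm] at h
  filter_upwards [hA_bdd, hA_net] with i hi hi_net y hy
  obtain ⟨z, hzt, hyz⟩ := Set.mem_iUnion₂.mp (hKt hy)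
  rw [Metric.mem_ball, dist_eq_norm] at hyz
  have hBA : ‖B - A i‖ ≤ ‖B‖ + |C| :=
    (norm_sub_le _ _).trans (by gcongr; exact hi.trans (le_abs_self C))
  calc dist (B y) (A i y)
      = ‖(B - A i) (y - z) + (B z - A i z)‖ := by
        rw [dist_eq_norm]; congr 1; simp only [sub_apply, map_sub]; abel
    _ ≤ ‖B - A i‖ * ‖y - z‖ + dist (B z) (A i z) :=
        (norm_add_le _ _).trans (add_le_add ((B - A i).le_opNorm _) (dist_eq_norm _ _).ge)
    _ < (‖B‖ + |C|) * r + ε / 2 :=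
        add_lt_add_of_le_of_lt (mul_le_mul hBA hyz.le (norm_nonneg _) (by positivity))
          (hi_net z hzt)
    _ < ε := by linarith

theorem IsCompactOperator.tendsto_comp_of_tendsto_apply {ι : Type*} {l : Filter ι}
    {A : ι → F →L[ℝ] G} {B : F →L[ℝ] G} {C : ℝ} (hA_bdd : ∀ᶠ i in l, ‖A i‖ ≤ C)
    (hA : ∀ y, Tendsto (fun i => A i y) l (𝓝 (B y))) {T : E →L[ℝ] F}
    (hT : IsCompactOperator T) : Tendsto (fun i => (A i).comp T) l (𝓝 (B.comp T)) := by
  obtain ⟨K, hK, hTK⟩ := hT.image_closedBall_subset_compact (f := (T : E →ₗ[ℝ] F)) 1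
  have hunif := Metric.tendstoUniformlyOn_iff.mp
    ((hK.totallyBounded.subset hTK).tendstoUniformlyOn_of_tendsto_apply hA_bdd hA)
  rw [Metric.tendsto_nhds]
  intro ε hε
  filter_upwards [hunif (ε / 2) (half_pos hε)] with i hi
  rw [dist_eq_norm]
  refine (ContinuousLinearMap.opNorm_le_of_unit_norm (half_pos hε).le fun u hu => ?_).trans_lt
    (half_lt_self hε)
  have hTu : T u ∈ (T : E →ₗ[ℝ] F) '' Metric.closedBall 0 1 := ⟨u, by simp [hu], rfl⟩
  simpa [dist_eq_norm'] using (hi _ hTu).le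

theorem norm_sub_comp_le (A : F →L[ℝ] F) (T : E →L[ℝ] F) :
    ‖T - A.comp T‖ ≤ (1 + ‖A‖) * ‖T‖ :=
  calc ‖T - A.comp T‖ ≤ ‖T‖ + ‖A‖ * ‖T‖ :=
        (norm_sub_le _ _).trans (add_le_add_right (A.opNorm_comp_le T) _)
    _ = (1 + ‖A‖) * ‖T‖ := by ring

variable {ι : Type*} {A : ι → F →L[ℝ] F} {C : ℝ≥0}

theorem iSup_norm_sub_comp_le (hA : ∀ i, ‖A i‖ ≤ C) (T : E →L[ℝ] F) :
    ⨆ i, ‖T - (A i).comp T‖ ≤ (1 + C) * ‖T‖ :=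
  Real.iSup_le (fun i => (norm_sub_comp_le _ _).trans (by gcongr; exact hA i)) (by positivity)

theorem lipschitzWith_iSup_norm_sub_comp (hA : ∀ i, ‖A i‖ ≤ C) :
    LipschitzWith (1 + C) fun T : E →L[ℝ] F => ⨆ i, ‖T - (A i).comp T‖ := by
  refine LipschitzWith.iSup_real (fun i => LipschitzWith.of_dist_le_mul fun T T' => ?_)
    fun T => ⟨(1 + C) * ‖T‖, Set.forall_mem_range.2 fun i =>
      (norm_sub_comp_le _ _).trans (by gcongr; exact hA i)⟩
  calc dist ‖T - (A i).comp T‖ ‖T' - (A i).comp T'‖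
      ≤ ‖(T - T') - (A i).comp (T - T')‖ := by
        rw [ContinuousLinearMap.comp_sub, sub_sub_sub_comm]; exact dist_norm_norm_le _ _
    _ ≤ (1 + C) * dist T T' := by
        rw [dist_eq_norm]
        exact (norm_sub_comp_le _ _).trans (by gcongr; exact hA i)
    _ = ((1 + C : ℝ≥0) : ℝ) * dist T T' := by push_cast; rfl

end Operators

theorem stmt7_general
    {U H : Type*}
    [NormedAddCommGroup U] [InnerProductSpace ℝ U]
    [NormedAddCommGroup H] [InnerProductSpace ℝ H] [CompleteSpace H]
    (S : ℝ → H →L[ℝ] H)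
    (hS0 : S 0 = 1)
    (hScont : ∀ h : H, ContinuousOn (fun t => S t h) (Set.Ici (0 : ℝ)))
    (p : ℝ) (hp : 1 ≤ p)
    {Ω : Type*} [MeasurableSpace Ω] (μ : Measure Ω)
    (σ : Ω → U →L[ℝ] H)
    (hσmeas : StronglyMeasurable σ)
    (hσcpt : ∀ᵐ ω ∂μ, IsCompactOperator (σ ω))
    (hσint : Integrable (fun ω => ‖σ ω‖ ^ p) μ)
    (Δ : ℕ → ℝ)
    (hΔlim : Tendsto Δ atTop (𝓝 0)) :
    (∀ᵐ ω ∂μ,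
      Tendsto (fun n => ⨆ x : Set.Icc (0 : ℝ) (Δ n), ‖σ ω - (S x).comp (σ ω)‖)
        atTop (𝓝 0)) ∧
    Tendsto (fun n =>
        ∫ ω, (⨆ x : Set.Icc (0 : ℝ) (Δ n), ‖σ ω - (S x).comp (σ ω)‖) ^ p ∂μ)
      atTop (𝓝 0) := by
  obtain ⟨b, hb⟩ := hΔlim.bddAbove_range
  obtain ⟨C, hC⟩ := isCompact_Icc.exists_norm_le_of_continuousOn_apply
    (K := Set.Icc 0 (max b 1)) fun h => (hScont h).mono Set.Icc_subset_Ici_self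
  have hC_Δ : ∀ n, ∀ x : Set.Icc (0 : ℝ) (Δ n), ‖S x‖ ≤ C := fun n x =>
    hC x ⟨x.2.1, x.2.2.trans ((hb ⟨n, rfl⟩).trans (le_max_left b 1))⟩
  have hC_nhds : ∀ᶠ x in 𝓝[≥] 0, ‖S x‖ ≤ C :=
    Filter.mem_of_superset (Icc_mem_nhdsGE (by positivity)) hC
  have hS_strong : ∀ y, Tendsto (fun x => S x y) (𝓝[≥] 0) (𝓝 ((1 : H →L[ℝ] H) y)) :=
    fun y => hS0 ▸ hScont y 0 Set.self_mem_Ici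
  have hae : ∀ᵐ ω ∂μ, Tendsto (fun n => ⨆ x : Set.Icc (0 : ℝ) (Δ n), ‖σ ω - (S x).comp (σ ω)‖)
      atTop (𝓝 0) := by
    filter_upwards [hσcpt] with ω hω
    have h_op := (hω.tendsto_comp_of_tendsto_apply hC_nhds hS_strong).const_sub (σ ω) |>.norm
    rw [ContinuousLinearMap.one_def, ContinuousLinearMap.id_comp, sub_self, norm_zero] at h_op
    exact tendsto_iSup_Icc_of_tendsto_nhdsGE (f := fun x => ‖σ ω - (S x).comp (σ ω)‖)
      (fun _ => norm_nonneg _) h_op hΔlim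
  refine ⟨hae, tendsto_integral_rpow_of_dominated (by linarith) (g := fun ω => (1 + C) * ‖σ ω‖)
    (fun n => ((lipschitzWith_iSup_norm_sub_comp (hC_Δ n)).continuous.comp_stronglyMeasurable
      hσmeas).aestronglyMeasurable)
    (fun n ω => Real.iSup_nonneg fun _ => norm_nonneg _)
    (fun n ω => iSup_norm_sub_comp_le (hC_Δ n) (σ ω)) ?_ hae⟩
  simpa only [Real.mul_rpow (by positivity : (0 : ℝ) ≤ 1 + C) (norm_nonneg _)] using
    hσint.const_mul ((1 + C) ^ p)

/-- Let `(S(t))_{t≥0}` be a `C₀`-semigroup on a separable Hilbert space `H`,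
`p ∈ [1,∞)`, and `σ` a strongly measurable random bounded operator from `U` to `H` which is
almost surely compact and satisfies `E[‖σ‖_op^p] < ∞`. For positive reals `Δ_n ↓ 0`, the
random variables `sup_{x∈[0,Δ_n]} ‖(I − S(x))∘σ‖_op` converge to `0` almost surely and in
`L^p`, i.e. `E[sup_{x∈[0,Δ_n]} ‖(I − S(x))∘σ‖_op^p] → 0`. -/
theorem stmt7
    {U H : Type*}
    [NormedAddCommGroup U] [InnerProductSpace ℝ U] [CompleteSpace U]
    [TopologicalSpace.SeparableSpace U]
    [NormedAddCommGroup H] [InnerProductSpace ℝ H] [CompleteSpace H]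
    [TopologicalSpace.SeparableSpace H]
    (S : ℝ → H →L[ℝ] H)
    (hS0 : S 0 = 1)
    (hSsemi : ∀ s t : ℝ, 0 ≤ s → 0 ≤ t → S (s + t) = (S s).comp (S t))
    (hScont : ∀ h : H, ContinuousOn (fun t => S t h) (Set.Ici (0 : ℝ)))
    (p : ℝ) (hp : 1 ≤ p)
    {Ω : Type*} [MeasurableSpace Ω] (μ : Measure Ω) [IsProbabilityMeasure μ]
    (σ : Ω → U →L[ℝ] H)
    (hσmeas : StronglyMeasurable σ)
    (hσcpt : ∀ᵐ ω ∂μ, IsCompactOperator (σ ω))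
    (hσint : Integrable (fun ω => ‖σ ω‖ ^ p) μ)
    (Δ : ℕ → ℝ) (hΔpos : ∀ n, 0 < Δ n) (hΔanti : Antitone Δ)
    (hΔlim : Tendsto Δ atTop (𝓝 0)) :
    (∀ᵐ ω ∂μ,
      Tendsto (fun n => ⨆ x : Set.Icc (0 : ℝ) (Δ n), ‖σ ω - (S x).comp (σ ω)‖)
        atTop (𝓝 0)) ∧
    Tendsto (fun n =>
        ∫ ω, (⨆ x : Set.Icc (0 : ℝ) (Δ n), ‖σ ω - (S x).comp (σ ω)‖) ^ p ∂μ)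
      atTop (𝓝 0) :=
  stmt7_general S hS0 hScont p hp μ σ hσmeas hσcpt hσint Δ hΔlim
end

section
/- Let U and H be separable Hilbert spaces, (S(t))_{t≥0} a C₀-semigroup of bounded linear operators on H, p ∈ [1,∞), T > 0, (Ω,𝔉,ℙ) a probability space, and (σ_s)_{s∈[0,T]} a family of strongly measurable random bounded operators from U to H such that: σ_s(ω) is compact for almost every ω for each s; E[‖σ_s‖_op^p] < ∞ for each s; and s ↦ σ_s is continuous in the p-th mean, i.e. E[‖σ_t − σ_s‖_op^p] → 0 as t → s for s,t ∈ [0,T]. Then for any sequence (Δ_n) of positive reals decreasing to 0, sup_{s∈[0,T]} E[sup_{x∈[0,Δ_n]} ‖(I − S(x))∘σ_s‖_op^p] → 0 as n → ∞. -/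
/-!
Write `ω_A(δ) = sup_{0 ≤ x ≤ δ} ‖A - S(x) A‖`. Banach–Steinhaus bounds `‖S(x)‖ ≤ M` for `x` in a
compact interval, so `ω_A(δ) ≤ (1 + M) ‖A‖` and `ω_A ≤ ω_B + (1 + M) ‖A - B‖`. For compact `A`,
the strong convergence `S(x) → I` is uniform on the compact closure of the image of the unit ball
(Ascoli), hence `ω_A(δ) → 0`, and dominated convergence gives `E[ω_{σ_s}(Δ_n)^p] → 0` for each `s`.
By `(a + b)^p ≤ 2^(p-1) (a^p + b^p)`, `E[ω_{σ_s}^p]` is controlled by `E[ω_{σ_i}^p]` and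
`E‖σ_s - σ_i‖^p`, so continuity in the `p`-th mean and compactness of `[0, T]` make the
convergence uniform in `s`.
-/

open MeasureTheory Filter
open scoped Topology

open Metric Set

theorem Real.rpow_add_le_mul_rpow_add_rpow {a b p : ℝ} (ha : 0 ≤ a) (hb : 0 ≤ b) (hp : 1 ≤ p) :
    (a + b) ^ p ≤ 2 ^ (p - 1) * (a ^ p + b ^ p) := by
  lift a to NNReal using ha
  lift b to NNReal using hb
  exact_mod_cast NNReal.rpow_add_le_mul_rpow_add_rpow a b hp

section RpowIntegral

variable {Ω : Type*} {p : ℝ} {f g h : Ω → ℝ}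

theorem rpow_le_mul_rpow_add_rpow_of_le_add (hp : 1 ≤ p) (hf : ∀ ω, 0 ≤ f ω) (hg : ∀ ω, 0 ≤ g ω)
    (hh : ∀ ω, 0 ≤ h ω) (hle : ∀ ω, h ω ≤ f ω + g ω) (ω : Ω) :
    h ω ^ p ≤ 2 ^ (p - 1) * (f ω ^ p + g ω ^ p) :=
  (Real.rpow_le_rpow (hh ω) (hle ω) (by linarith)).trans
    (Real.rpow_add_le_mul_rpow_add_rpow (hf ω) (hg ω) hp)

variable [MeasurableSpace Ω] {μ : Measure Ω}

theorem MeasureTheory.Integrable.rpow_of_le_add (hp : 1 ≤ p) (hf : ∀ ω, 0 ≤ f ω) (hg : ∀ ω, 0 ≤ g ω)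
    (hh : ∀ ω, 0 ≤ h ω) (hle : ∀ ω, h ω ≤ f ω + g ω) (hfi : Integrable (fun ω => f ω ^ p) μ)
    (hgi : Integrable (fun ω => g ω ^ p) μ) (hhm : AEMeasurable h μ) :
    Integrable (fun ω => h ω ^ p) μ :=
  ((hfi.add hgi).const_mul _).mono' (hhm.pow_const p).aestronglyMeasurable <|
    .of_forall fun ω => by
      rw [Real.norm_of_nonneg (Real.rpow_nonneg (hh ω) p)]
      exact rpow_le_mul_rpow_add_rpow_of_le_add hp hf hg hh hle ω

theorem integral_rpow_le_of_le_add (hp : 1 ≤ p) (hf : ∀ ω, 0 ≤ f ω) (hg : ∀ ω, 0 ≤ g ω)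
    (hh : ∀ ω, 0 ≤ h ω) (hle : ∀ ω, h ω ≤ f ω + g ω) (hfi : Integrable (fun ω => f ω ^ p) μ)
    (hgi : Integrable (fun ω => g ω ^ p) μ) (hhm : AEMeasurable h μ) :
    ∫ ω, h ω ^ p ∂μ ≤ 2 ^ (p - 1) * (∫ ω, f ω ^ p ∂μ + ∫ ω, g ω ^ p ∂μ) := by
  rw [← integral_add hfi hgi, ← integral_const_mul]
  exact integral_mono (hfi.rpow_of_le_add hp hf hg hh hle hgi hhm) ((hfi.add hgi).const_mul _)
    (rpow_le_mul_rpow_add_rpow_of_le_add hp hf hg hh hle)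

end RpowIntegral

theorem IsCompact.tendsto_iSup_of_le_mul_add {X ι : Type*} [TopologicalSpace X] {K : Set X}
    (hK : IsCompact K) {l : Filter ι} {g : ι → X → ℝ} {d : X → X → ℝ} {C : ℝ} (hC : 0 ≤ C)
    (hg0 : ∀ n, ∀ s ∈ K, 0 ≤ g n s) (hg : ∀ s ∈ K, Tendsto (fun n => g n s) l (𝓝 0))
    (hd : ∀ s ∈ K, Tendsto (fun t => d t s) (𝓝[K] s) (𝓝 0))
    (hle : ∀ n, ∀ s ∈ K, ∀ i ∈ K, g n s ≤ C * (g n i + d s i)) :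
    Tendsto (fun n => ⨆ s : K, g n s) l (𝓝 0) := by
  refine tendsto_order.2 ⟨fun a ha => .of_forall fun n =>
    ha.trans_le (Real.iSup_nonneg fun s => hg0 n s s.2), fun ε hε => ?_⟩
  set η := ε / (2 * (C + 1))
  have hη : 0 < η := by positivity
  have hCη : C * (η + η) < ε := by
    have : C * (η + η) = ε * (C / (C + 1)) := by simp only [η]; field_simp; ring
    rw [this]
    exact mul_lt_of_lt_one_right hε ((div_lt_one (by linarith)).2 (by linarith))
  obtain ⟨t, htK, hcover⟩ := hK.elim_nhdsWithin_subcover (fun i => {s | d s i < η})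
    fun i hi => hd i hi (Iio_mem_nhds hη)
  have hgt : ∀ᶠ n in l, ∀ i ∈ t, g n i < η :=
    (t.eventually_all).2 fun i hi => (hg i (htK i hi)).eventually (Iio_mem_nhds hη)
  filter_upwards [hgt] with n hn
  refine (Real.iSup_le (fun s => ?_) (by positivity : 0 ≤ C * (η + η))).trans_lt hCη
  obtain ⟨i, hi, hsi⟩ := mem_iUnion₂.1 (hcover s.2)
  exact (hle n s s.2 i (htK i hi)).trans
    (mul_le_mul_of_nonneg_left (add_le_add (hn i hi).le (le_of_lt hsi)) hC)

theorem IsCompact.exists_opNorm_le_of_continuousOn_apply {X E F : Type*} [TopologicalSpace X]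
    [NormedAddCommGroup E] [NormedSpace ℝ E] [CompleteSpace E]
    [NormedAddCommGroup F] [NormedSpace ℝ F] {K : Set X} (hK : IsCompact K)
    {T : X → E →L[ℝ] F} (hT : ∀ h, ContinuousOn (fun x => T x h) K) :
    ∃ M, 0 ≤ M ∧ ∀ x ∈ K, ‖T x‖ ≤ M := by
  obtain ⟨M, hM⟩ := banach_steinhaus (g := fun x : K => T x) fun h => by
    obtain ⟨C, hC⟩ := hK.exists_bound_of_continuousOn (hT h)
    exact ⟨C, fun x => hC x x.2⟩
  exact ⟨max M 0, le_max_right _ _, fun x hx => (hM ⟨x, hx⟩).trans (le_max_left _ _)⟩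

theorem ContinuousLinearMap.tendstoUniformlyOn_of_tendsto_apply
    {ι E F : Type*} [NormedAddCommGroup E] [NormedSpace ℝ E]
    [NormedAddCommGroup F] [NormedSpace ℝ F]
    {T : ι → E →L[ℝ] F} {T₀ : E →L[ℝ] F} {l : Filter ι} {C : ℝ} (hC : ∀ i, ‖T i‖ ≤ C)
    (hT : ∀ h, Tendsto (fun i => T i h) l (𝓝 (T₀ h))) {K : Set E} (hK : IsCompact K) :
    TendstoUniformlyOn (fun i h => T i h) T₀ l K := by
  have : CompactSpace K := isCompact_iff_compactSpace.mp hK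
  have hequi : Equicontinuous ((↑) ∘ T : ι → E → F) := by
    have bounded_iff_equicontinuous := (NormedSpace.equicontinuous_TFAE T).out 5 1
    exact bounded_iff_equicontinuous.mp ⟨C, hC⟩
  rw [tendstoUniformlyOn_iff_tendstoUniformly_comp_coe]
  exact UniformFun.tendsto_iff_tendstoUniformly.mp <|
    (((equicontinuous_restrict_iff _).mpr (hequi.equicontinuousOn K)).tendsto_uniformFun_iff_pi l
      (K.domRestrict T₀)).mpr (tendsto_pi_nhds.mpr fun h => hT h)

theorem norm_sub_comp_le_of_norm_le {U H : Type*} [NormedAddCommGroup U]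
    [NormedSpace ℝ U] [NormedAddCommGroup H] [NormedSpace ℝ H] {T : H →L[ℝ] H} {M : ℝ}
    (hT : ‖T‖ ≤ M) (A : U →L[ℝ] H) : ‖A - T.comp A‖ ≤ (1 + M) * ‖A‖ :=
  calc ‖A - T.comp A‖ ≤ ‖A‖ + ‖T‖ * ‖A‖ :=
        (norm_sub_le _ _).trans (by gcongr; exact ContinuousLinearMap.opNorm_comp_le _ _)
    _ ≤ (1 + M) * ‖A‖ := by nlinarith [norm_nonneg A]

section ModulusAtZero

variable {U H : Type*} [NormedAddCommGroup U] [NormedSpace ℝ U]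
  [NormedAddCommGroup H] [NormedSpace ℝ H]

noncomputable def modulusAtZero (S : ℝ → H →L[ℝ] H) (A : U →L[ℝ] H) (δ : ℝ) : ℝ :=
  ⨆ x : Icc (0 : ℝ) δ, ‖A - (S x).comp A‖

variable {S : ℝ → H →L[ℝ] H} {M δ : ℝ}

theorem modulusAtZero_nonneg (A : U →L[ℝ] H) (δ : ℝ) : 0 ≤ modulusAtZero S A δ :=
  Real.iSup_nonneg fun _ => norm_nonneg _

theorem bddAbove_norm_sub_comp (hM : ∀ x ∈ Icc 0 δ, ‖S x‖ ≤ M) (A : U →L[ℝ] H) {D : Set ℝ}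
    (hD : D ⊆ Icc 0 δ) : BddAbove (range fun x : D => ‖A - (S x).comp A‖) :=
  ⟨(1 + M) * ‖A‖, forall_mem_range.2 fun x => norm_sub_comp_le_of_norm_le (hM x (hD x.2)) A⟩

theorem modulusAtZero_le (hM0 : 0 ≤ M) (hM : ∀ x ∈ Icc 0 δ, ‖S x‖ ≤ M) (A : U →L[ℝ] H) :
    modulusAtZero S A δ ≤ (1 + M) * ‖A‖ :=
  Real.iSup_le (fun x => norm_sub_comp_le_of_norm_le (hM x x.2) A) (by positivity)

theorem rpow_modulusAtZero_le {p : ℝ} (hp : 0 ≤ p) (hM0 : 0 ≤ M) (hM : ∀ x ∈ Icc 0 δ, ‖S x‖ ≤ M)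
    (A : U →L[ℝ] H) : modulusAtZero S A δ ^ p ≤ (1 + M) ^ p * ‖A‖ ^ p :=
  (Real.rpow_le_rpow (modulusAtZero_nonneg A δ) (modulusAtZero_le hM0 hM A) hp).trans_eq
    (Real.mul_rpow (by positivity) (norm_nonneg A))

theorem modulusAtZero_le_add (hM0 : 0 ≤ M) (hM : ∀ x ∈ Icc 0 δ, ‖S x‖ ≤ M) (A B : U →L[ℝ] H) :
    modulusAtZero S A δ ≤ modulusAtZero S B δ + (1 + M) * ‖A - B‖ := by
  refine Real.iSup_le (fun x => ?_) (add_nonneg (modulusAtZero_nonneg B δ) (by positivity))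
  calc ‖A - (S x).comp A‖ = ‖(B - (S x).comp B) + ((A - B) - (S x).comp (A - B))‖ := by
        rw [ContinuousLinearMap.comp_sub]; abel_nf
    _ ≤ ‖B - (S x).comp B‖ + ‖(A - B) - (S x).comp (A - B)‖ := norm_add_le _ _
    _ ≤ modulusAtZero S B δ + (1 + M) * ‖A - B‖ :=
        add_le_add (le_ciSup (bddAbove_norm_sub_comp hM B subset_rfl) x)
          (norm_sub_comp_le_of_norm_le (hM x x.2) _)

theorem modulusAtZero_eq_iSup_of_subset_closure
    (hScont : ∀ h : H, ContinuousOn (fun t => S t h) (Ici 0)) (hM : ∀ x ∈ Icc 0 δ, ‖S x‖ ≤ M)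
    {D : Set ℝ} (hD : D ⊆ Icc 0 δ) (hdense : Icc 0 δ ⊆ closure D) (A : U →L[ℝ] H) :
    modulusAtZero S A δ = ⨆ x : D, ‖A - (S x).comp A‖ := by
  have hnonneg : 0 ≤ ⨆ x : D, ‖A - (S x).comp A‖ := Real.iSup_nonneg fun _ => norm_nonneg _
  refine le_antisymm (Real.iSup_le (fun x => ?_) hnonneg)
    (Real.iSup_le (fun x => le_ciSup (bddAbove_norm_sub_comp hM A subset_rfl) ⟨x, hD x.2⟩)
      (modulusAtZero_nonneg A δ))
  refine ContinuousLinearMap.opNorm_le_bound _ hnonneg fun u => ?_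
  obtain ⟨d, hdD, hdx⟩ := mem_closure_iff_seq_limit.1 (hdense x.2)
  have hd : Tendsto d atTop (𝓝[Ici 0] x) :=
    tendsto_nhdsWithin_iff.2 ⟨hdx, .of_forall fun k => (hD (hdD k)).1⟩
  have hlim : Tendsto (fun k => A u - S (d k) (A u)) atTop (𝓝 (A u - S x (A u))) :=
    tendsto_const_nhds.sub ((hScont (A u) x x.2.1).tendsto.comp hd)
  refine le_of_tendsto hlim.norm (.of_forall fun k => ?_)
  calc ‖A u - S (d k) (A u)‖ = ‖(A - (S (d k)).comp A) u‖ := rfl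
    _ ≤ ‖A - (S (d k)).comp A‖ * ‖u‖ := ContinuousLinearMap.le_opNorm _ _
    _ ≤ (⨆ x : D, ‖A - (S x).comp A‖) * ‖u‖ := by
        gcongr
        exact le_ciSup (bddAbove_norm_sub_comp hM A hD) ⟨d k, hdD k⟩

theorem measurable_modulusAtZero [CompleteSpace H]
    (hScont : ∀ h : H, ContinuousOn (fun t => S t h) (Ici 0)) (δ : ℝ)
    {Ω : Type*} [MeasurableSpace Ω] {g : Ω → U →L[ℝ] H} (hg : StronglyMeasurable g) :
    Measurable fun ω => modulusAtZero S (g ω) δ := by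
  obtain ⟨M, -, hM⟩ := isCompact_Icc.exists_opNorm_le_of_continuousOn_apply
    fun h => (hScont h).mono (Icc_subset_Ici_self : Icc (0 : ℝ) δ ⊆ Ici 0)
  obtain ⟨D, hD, hDc, hdense⟩ :=
    (TopologicalSpace.IsSeparable.of_separableSpace (Icc (0 : ℝ) δ)).exists_countable_dense_subset
  have : Countable D := hDc.to_subtype
  simp_rw [modulusAtZero_eq_iSup_of_subset_closure hScont hM hD hdense]
  refine Measurable.iSup fun x => ?_
  have hcont : Continuous fun A : U →L[ℝ] H => ‖A - (S x).comp A‖ :=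
    (continuous_id.sub (ContinuousLinearMap.compL ℝ U H H (S x)).continuous).norm
  exact (hcont.comp_stronglyMeasurable hg).measurable

theorem tendsto_modulusAtZero_of_isCompactOperator [CompleteSpace H] (hS0 : S 0 = 1)
    (hScont : ∀ h : H, ContinuousOn (fun t => S t h) (Ici 0)) {A : U →L[ℝ] H}
    (hA : IsCompactOperator A) : Tendsto (modulusAtZero S A) (𝓝[>] 0) (𝓝 0) := by
  obtain ⟨M, -, hM⟩ := isCompact_Icc.exists_opNorm_le_of_continuousOn_apply
    fun h => (hScont h).mono (Icc_subset_Ici_self : Icc (0 : ℝ) 1 ⊆ Ici 0)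
  let x₀ : Icc (0 : ℝ) 1 := ⟨0, left_mem_Icc.2 zero_le_one⟩
  have hcont : ∀ h, Continuous fun x : Icc (0 : ℝ) 1 => S x h := fun h =>
    continuousOn_iff_continuous_domRestrict.1 ((hScont h).mono Icc_subset_Ici_self)
  have hunif : TendstoUniformlyOn (fun (x : Icc (0 : ℝ) 1) h => S x h) (S 0) (𝓝 x₀)
      (closure (A '' closedBall 0 1)) :=
    ContinuousLinearMap.tendstoUniformlyOn_of_tendsto_apply (T := fun x : Icc (0 : ℝ) 1 => S x)
      (fun x => hM x x.2) (fun h => (hcont h).tendsto x₀) (hA.isCompact_closure_image_closedBall 1)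
  refine tendsto_order.2 ⟨fun a ha => .of_forall fun δ => ha.trans_le (modulusAtZero_nonneg A δ),
    fun ε hε => ?_⟩
  obtain ⟨r, hr, hclose⟩ := Metric.eventually_nhds_iff.1
    (Metric.tendstoUniformlyOn_iff.1 hunif (ε / 2) (half_pos hε))
  filter_upwards [Ioo_mem_nhdsGT (lt_min hr one_pos)] with δ hδ
  refine (Real.iSup_le (fun x => ContinuousLinearMap.opNorm_le_of_unit_norm (half_pos hε).le
    fun u hu => ?_) (half_pos hε).le).trans_lt (half_lt_self hε)
  have hx1 : (x : ℝ) ≤ 1 := x.2.2.trans (hδ.2.le.trans (min_le_right _ _))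
  have hxr : dist (⟨x, x.2.1, hx1⟩ : Icc (0 : ℝ) 1) x₀ < r := by
    rw [Subtype.dist_eq, Real.dist_eq, sub_zero, abs_of_nonneg x.2.1]
    exact x.2.2.trans_lt (hδ.2.trans_le (min_le_left _ _))
  have := hclose hxr (A u) (subset_closure (mem_image_of_mem A (by simp [hu])))
  rw [hS0, dist_eq_norm] at this
  exact this.le

end ModulusAtZero

section RandomOperators

variable {U H Ω : Type*} [NormedAddCommGroup U] [NormedSpace ℝ U]
  [NormedAddCommGroup H] [NormedSpace ℝ H] [CompleteSpace H] [MeasurableSpace Ω] {μ : Measure Ω}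
  {S : ℝ → H →L[ℝ] H} {M δ p : ℝ}

theorem integrable_rpow_modulusAtZero (hScont : ∀ h : H, ContinuousOn (fun t => S t h) (Ici 0))
    (hp : 0 ≤ p) (hM0 : 0 ≤ M) (hM : ∀ x ∈ Icc 0 δ, ‖S x‖ ≤ M) {g : Ω → U →L[ℝ] H}
    (hg : StronglyMeasurable g) (hgi : Integrable (fun ω => ‖g ω‖ ^ p) μ) :
    Integrable (fun ω => modulusAtZero S (g ω) δ ^ p) μ :=
  (hgi.const_mul _).mono' ((measurable_modulusAtZero hScont δ hg).pow_const p).aestronglyMeasurable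
    (.of_forall fun ω => by
      rw [Real.norm_of_nonneg (Real.rpow_nonneg (modulusAtZero_nonneg _ δ) p)]
      exact rpow_modulusAtZero_le hp hM0 hM (g ω))

theorem tendsto_integral_rpow_modulusAtZero (hS0 : S 0 = 1)
    (hScont : ∀ h : H, ContinuousOn (fun t => S t h) (Ici 0)) (hp : 0 < p) (hM0 : 0 ≤ M) {b : ℝ}
    (hM : ∀ x ∈ Icc 0 b, ‖S x‖ ≤ M) {g : Ω → U →L[ℝ] H} (hg : StronglyMeasurable g)
    (hcpt : ∀ᵐ ω ∂μ, IsCompactOperator (g ω)) (hgi : Integrable (fun ω => ‖g ω‖ ^ p) μ)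
    {Δ : ℕ → ℝ} (hΔ : Tendsto Δ atTop (𝓝[>] 0)) (hΔb : ∀ n, Δ n ≤ b) :
    Tendsto (fun n => ∫ ω, modulusAtZero S (g ω) (Δ n) ^ p ∂μ) atTop (𝓝 0) := by
  have hMn : ∀ n, ∀ x ∈ Icc 0 (Δ n), ‖S x‖ ≤ M := fun n x hx => hM x ⟨hx.1, hx.2.trans (hΔb n)⟩
  have hlim := tendsto_integral_of_dominated_convergence (fun ω => (1 + M) ^ p * ‖g ω‖ ^ p)
    (fun n => ((measurable_modulusAtZero hScont (Δ n) hg).pow_const p).aestronglyMeasurable)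
    (hgi.const_mul _) (fun n => .of_forall fun ω => by
      rw [Real.norm_of_nonneg (Real.rpow_nonneg (modulusAtZero_nonneg _ _) p)]
      exact rpow_modulusAtZero_le hp.le hM0 (hMn n) (g ω))
    (hcpt.mono fun ω hω => by
      simpa [Function.comp_def, Real.zero_rpow hp.ne'] using
        ((Real.continuousAt_rpow_const 0 p (Or.inr hp.le)).tendsto.comp
          ((tendsto_modulusAtZero_of_isCompactOperator hS0 hScont hω).comp hΔ)))
  simpa using hlim

theorem integral_rpow_modulusAtZero_le
    (hScont : ∀ h : H, ContinuousOn (fun t => S t h) (Ici 0)) (hp : 1 ≤ p) (hM0 : 0 ≤ M)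
    (hM : ∀ x ∈ Icc 0 δ, ‖S x‖ ≤ M) {g₁ g₂ : Ω → U →L[ℝ] H} (hg₁ : StronglyMeasurable g₁)
    (hg₂ : StronglyMeasurable g₂) (hg₁i : Integrable (fun ω => ‖g₁ ω‖ ^ p) μ)
    (hg₂i : Integrable (fun ω => ‖g₂ ω‖ ^ p) μ) :
    ∫ ω, modulusAtZero S (g₁ ω) δ ^ p ∂μ ≤ 2 ^ (p - 1) * (1 + M) ^ p *
      (∫ ω, modulusAtZero S (g₂ ω) δ ^ p ∂μ + ∫ ω, ‖g₁ ω - g₂ ω‖ ^ p ∂μ) := by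
  have hp0 : 0 ≤ p := by linarith
  have hscale : ∀ ω, ((1 + M) * ‖g₁ ω - g₂ ω‖) ^ p = (1 + M) ^ p * ‖g₁ ω - g₂ ω‖ ^ p :=
    fun ω => Real.mul_rpow (by positivity) (norm_nonneg _)
  have hdiff : Integrable (fun ω => ‖g₁ ω - g₂ ω‖ ^ p) μ :=
    hg₁i.rpow_of_le_add hp (fun _ => norm_nonneg _) (fun _ => norm_nonneg _)
      (fun _ => norm_nonneg _) (fun ω => norm_sub_le _ _) hg₂i
      (hg₁.sub hg₂).norm.measurable.aemeasurable
  have hI₂ : 0 ≤ ∫ ω, modulusAtZero S (g₂ ω) δ ^ p ∂μ :=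
    integral_nonneg fun ω => Real.rpow_nonneg (modulusAtZero_nonneg _ δ) p
  have hJ : 0 ≤ ∫ ω, ‖g₁ ω - g₂ ω‖ ^ p ∂μ := integral_nonneg fun ω => by positivity
  have hMp : 1 ≤ (1 + M) ^ p := Real.one_le_rpow (by linarith) hp0
  calc ∫ ω, modulusAtZero S (g₁ ω) δ ^ p ∂μ
      ≤ 2 ^ (p - 1) * (∫ ω, modulusAtZero S (g₂ ω) δ ^ p ∂μ +
          ∫ ω, ((1 + M) * ‖g₁ ω - g₂ ω‖) ^ p ∂μ) :=
        integral_rpow_le_of_le_add hp (fun _ => modulusAtZero_nonneg _ δ) (fun _ => by positivity)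
          (fun _ => modulusAtZero_nonneg _ δ) (fun ω => modulusAtZero_le_add hM0 hM _ _)
          (integrable_rpow_modulusAtZero hScont hp0 hM0 hM hg₂ hg₂i)
          ((hdiff.const_mul _).congr (.of_forall fun ω => (hscale ω).symm))
          (measurable_modulusAtZero hScont δ hg₁).aemeasurable
    _ = 2 ^ (p - 1) * (∫ ω, modulusAtZero S (g₂ ω) δ ^ p ∂μ +
          (1 + M) ^ p * ∫ ω, ‖g₁ ω - g₂ ω‖ ^ p ∂μ) := by
        simp_rw [hscale, integral_const_mul]
    _ ≤ 2 ^ (p - 1) * (1 + M) ^ p *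
          (∫ ω, modulusAtZero S (g₂ ω) δ ^ p ∂μ + ∫ ω, ‖g₁ ω - g₂ ω‖ ^ p ∂μ) := by
        rw [mul_assoc]
        gcongr
        nlinarith

end RandomOperators

theorem stmt8_general
    {U H : Type*}
    [NormedAddCommGroup U] [InnerProductSpace ℝ U]
    [NormedAddCommGroup H] [InnerProductSpace ℝ H] [CompleteSpace H]
    (S : ℝ → H →L[ℝ] H)
    (hS0 : S 0 = 1)
    (hScont : ∀ h : H, ContinuousOn (fun t => S t h) (Set.Ici (0 : ℝ)))
    (p : ℝ) (hp : 1 ≤ p) (T : ℝ)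
    {Ω : Type*} [MeasurableSpace Ω] (μ : Measure Ω)
    (σ : ℝ → Ω → U →L[ℝ] H)
    (hσmeas : ∀ s ∈ Set.Icc (0 : ℝ) T, StronglyMeasurable (σ s))
    (hσcpt : ∀ s ∈ Set.Icc (0 : ℝ) T, ∀ᵐ ω ∂μ, IsCompactOperator (σ s ω))
    (hσint : ∀ s ∈ Set.Icc (0 : ℝ) T, Integrable (fun ω => ‖σ s ω‖ ^ p) μ)
    (hσcont : ∀ s ∈ Set.Icc (0 : ℝ) T,
      Tendsto (fun t => ∫ ω, ‖σ t ω - σ s ω‖ ^ p ∂μ) (nhdsWithin s (Set.Icc (0 : ℝ) T)) (𝓝 0))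
    (Δ : ℕ → ℝ) (hΔpos : ∀ n, 0 < Δ n)
    (hΔlim : Tendsto Δ atTop (𝓝 0)) :
    Tendsto (fun n => ⨆ s : Set.Icc (0 : ℝ) T,
        ∫ ω, (⨆ x : Set.Icc (0 : ℝ) (Δ n), ‖σ s ω - (S x).comp (σ s ω)‖) ^ p ∂μ)
      atTop (𝓝 0) := by
  obtain ⟨b, hb⟩ := hΔlim.bddAbove_range
  have hΔb : ∀ n, Δ n ≤ b := fun n => hb ⟨n, rfl⟩
  obtain ⟨M, hM0, hM⟩ := isCompact_Icc.exists_opNorm_le_of_continuousOn_apply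
    fun h => (hScont h).mono (Icc_subset_Ici_self : Icc (0 : ℝ) b ⊆ Ici 0)
  have hMn : ∀ n, ∀ x ∈ Icc 0 (Δ n), ‖S x‖ ≤ M := fun n x hx => hM x ⟨hx.1, hx.2.trans (hΔb n)⟩
  have hΔ : Tendsto Δ atTop (𝓝[>] 0) := tendsto_nhdsWithin_iff.2 ⟨hΔlim, .of_forall hΔpos⟩
  exact isCompact_Icc.tendsto_iSup_of_le_mul_add
    (g := fun n s => ∫ ω, modulusAtZero S (σ s ω) (Δ n) ^ p ∂μ) (by positivity)
    (fun n s _ => integral_nonneg fun ω => Real.rpow_nonneg (modulusAtZero_nonneg _ _) p)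
    (fun s hs => tendsto_integral_rpow_modulusAtZero hS0 hScont (by linarith) hM0 hM
      (hσmeas s hs) (hσcpt s hs) (hσint s hs) hΔ hΔb)
    hσcont
    (fun n s hs i hi => integral_rpow_modulusAtZero_le hScont hp hM0 (hMn n) (hσmeas s hs)
      (hσmeas i hi) (hσint s hs) (hσint i hi))

/-- Let `(S(t))_{t≥0}` be a `C₀`-semigroup on a separable Hilbert space `H`,
`p ∈ [1,∞)`, `T > 0`, and `(σ_s)_{s∈[0,T]}` a family of strongly measurable random bounded
operators from `U` to `H`, almost surely compact, with `E[‖σ_s‖_op^p] < ∞` and continuous in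
the `p`-th mean.  Then for positive reals `Δ_n ↓ 0`,
`sup_{s∈[0,T]} E[sup_{x∈[0,Δ_n]} ‖(I − S(x))∘σ_s‖_op^p] → 0` as `n → ∞`. -/
theorem stmt8
    {U H : Type*}
    [NormedAddCommGroup U] [InnerProductSpace ℝ U] [CompleteSpace U]
    [TopologicalSpace.SeparableSpace U]
    [NormedAddCommGroup H] [InnerProductSpace ℝ H] [CompleteSpace H]
    [TopologicalSpace.SeparableSpace H]
    (S : ℝ → H →L[ℝ] H)
    (hS0 : S 0 = 1)
    (hSsemi : ∀ s t : ℝ, 0 ≤ s → 0 ≤ t → S (s + t) = (S s).comp (S t))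
    (hScont : ∀ h : H, ContinuousOn (fun t => S t h) (Set.Ici (0 : ℝ)))
    (p : ℝ) (hp : 1 ≤ p) (T : ℝ) (hT : 0 < T)
    {Ω : Type*} [MeasurableSpace Ω] (μ : Measure Ω) [IsProbabilityMeasure μ]
    (σ : ℝ → Ω → U →L[ℝ] H)
    (hσmeas : ∀ s ∈ Set.Icc (0 : ℝ) T, StronglyMeasurable (σ s))
    (hσcpt : ∀ s ∈ Set.Icc (0 : ℝ) T, ∀ᵐ ω ∂μ, IsCompactOperator (σ s ω))
    (hσint : ∀ s ∈ Set.Icc (0 : ℝ) T, Integrable (fun ω => ‖σ s ω‖ ^ p) μ)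
    (hσcont : ∀ s ∈ Set.Icc (0 : ℝ) T,
      Tendsto (fun t => ∫ ω, ‖σ t ω - σ s ω‖ ^ p ∂μ) (nhdsWithin s (Set.Icc (0 : ℝ) T)) (𝓝 0))
    (Δ : ℕ → ℝ) (hΔpos : ∀ n, 0 < Δ n) (hΔanti : Antitone Δ)
    (hΔlim : Tendsto Δ atTop (𝓝 0)) :
    Tendsto (fun n => ⨆ s : Set.Icc (0 : ℝ) T,
        ∫ ω, (⨆ x : Set.Icc (0 : ℝ) (Δ n), ‖σ s ω - (S x).comp (σ s ω)‖) ^ p ∂μ)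
      atTop (𝓝 0) :=
  stmt8_general S hS0 hScont p hp T μ σ hσmeas hσcpt hσint hσcont Δ hΔpos hΔlim
end
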